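/- For 0 < q < 1, complex a, and nonnegative integer n, ∑_{k=0}^∞ q^{k(k+1)/2} A_q(a q^{k-2n})/(q;q)_k = (-q;q)_∞ · (a q^{1-2n}; q²)_∞, where A_q(z) = ∑_{m=0}^∞ q^{m²}(-z)^m/(q;q)_m. -/

import Mathlib

/-!
Expanding `A_q` and exchanging the two absolutely convergent sums, the inner sum over `k` becomes
Euler's series `∑ q^(k(k-1)/2) x^k / (q;q)_k = (-x;q)_∞` at `x = q^(m+1)`. Since
`(-q^(m+1);q)_∞ = (-q;q)_∞ / (-q;q)_m` and `(q;q)_m (-q;q)_m = (q²;q²)_m`, what remains is Euler's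
series in base `q²` at `x = -a q^(1-2n)`. Euler's identity itself comes from the functional
equation `E(x) = (1 + x) E(qx)`, iterated `N` times, and continuity of `E` at `0`.
-/

noncomputable def qpC (q a : ℂ) (n : ℕ) : ℂ := ∏ k ∈ Finset.range n, (1 - a * q ^ k)

noncomputable def qpiC (q a : ℂ) : ℂ := ∏' k : ℕ, (1 - a * q ^ k)

noncomputable def Aq (q : ℝ) (z : ℂ) : ℂ :=
  ∑' k : ℕ, (q : ℂ) ^ (k ^ 2) * (-z) ^ k / qpC (q : ℂ) (q : ℂ) k

open Filter Finset Topology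

lemma summable_pow_choose_two_mul_pow {𝕜 : Type*} [NormedField 𝕜] [CompleteSpace 𝕜] {q : 𝕜}
    (hq : ‖q‖ < 1) (x : 𝕜) : Summable fun k ↦ q ^ k.choose 2 * x ^ k := by
  have hlim : Tendsto (fun k ↦ ‖q ^ k * x‖) atTop (𝓝 0) := by
    simpa [norm_mul, norm_pow] using
      (tendsto_pow_atTop_nhds_zero_of_lt_one (norm_nonneg q) hq).mul_const ‖x‖
  refine summable_of_ratio_norm_eventually_le (r := 1 / 2) (by norm_num) ?_
  filter_upwards [hlim.eventually (eventually_le_nhds (by norm_num : (0 : ℝ) < 1 / 2))] with k hk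
  calc ‖q ^ (k + 1).choose 2 * x ^ (k + 1)‖ = ‖q ^ k * x‖ * ‖q ^ k.choose 2 * x ^ k‖ := by
        rw [Nat.choose_succ_succ', Nat.choose_one_right, ← norm_mul]; ring_nf
    _ ≤ 1 / 2 * ‖q ^ k.choose 2 * x ^ k‖ := by gcongr

section QPochhammer

variable {q : ℂ}

lemma qpC_succ (q a : ℂ) (k : ℕ) : qpC q a (k + 1) = qpC q a k * (1 - a * q ^ k) :=
  prod_range_succ _ _

lemma qpC_mul_qpC_neg (q : ℂ) (m : ℕ) : qpC q q m * qpC q (-q) m = qpC (q ^ 2) (q ^ 2) m := by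
  rw [qpC, qpC, qpC, ← prod_mul_distrib]
  exact prod_congr rfl fun j _ ↦ by ring

lemma one_sub_norm_pow_le_norm_qpC (hq : ‖q‖ < 1) (k : ℕ) : (1 - ‖q‖) ^ k ≤ ‖qpC q q k‖ := by
  have hfactor (j : ℕ) : 1 - ‖q‖ ≤ ‖1 - q * q ^ j‖ :=
    calc 1 - ‖q‖ ≤ ‖(1 : ℂ)‖ - ‖q * q ^ j‖ := by
          rw [norm_one, norm_mul, norm_pow]
          gcongr
          exact mul_le_of_le_one_right (norm_nonneg q) (pow_le_one₀ (norm_nonneg q) hq.le)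
      _ ≤ ‖1 - q * q ^ j‖ := norm_sub_norm_le _ _
  calc (1 - ‖q‖) ^ k = ∏ _j ∈ range k, (1 - ‖q‖) := by rw [prod_const, card_range]
    _ ≤ ∏ j ∈ range k, ‖1 - q * q ^ j‖ :=
        prod_le_prod (fun _ _ ↦ by linarith) fun j _ ↦ hfactor j
    _ = ‖qpC q q k‖ := (norm_prod _ _).symm

lemma qpC_ne_zero (hq : ‖q‖ < 1) (k : ℕ) : qpC q q k ≠ 0 :=
  norm_pos_iff.mp <| (pow_pos (sub_pos.2 hq) k).trans_le (one_sub_norm_pow_le_norm_qpC hq k)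

lemma multipliable_one_sub_mul_pow (hq : ‖q‖ < 1) (a : ℂ) :
    Multipliable fun k : ℕ ↦ 1 - a * q ^ k := by
  have := Complex.multipliable_one_add_of_summable
    ((summable_geometric_of_norm_lt_one hq).mul_left a).neg
  simpa only [← sub_eq_add_neg] using this

lemma qpC_mul_qpiC (hq : ‖q‖ < 1) (a : ℂ) (m : ℕ) :
    qpC q a m * qpiC q (a * q ^ m) = qpiC q a := by
  have htail : Multipliable fun i ↦ 1 - a * q ^ (i + m) :=
    (multipliable_one_sub_mul_pow hq (a * q ^ m)).congr fun i ↦ by ring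
  rw [qpC, qpiC, qpiC, ← Multipliable.prod_mul_tprod_nat_mul' (f := fun k ↦ 1 - a * q ^ k) htail]
  exact congrArg _ (tprod_congr fun i ↦ by ring)

end QPochhammer

section Euler

variable {q : ℂ}

noncomputable def eulerTerm (q x : ℂ) (k : ℕ) : ℂ := q ^ k.choose 2 * x ^ k / qpC q q k

lemma norm_pow_mul_pow_div_qpC_le (hq : ‖q‖ < 1) {e k : ℕ} (he : k.choose 2 ≤ e) {x : ℂ}
    {R : ℝ} (hx : ‖x‖ ≤ R) :
    ‖q ^ e * x ^ k / qpC q q k‖ ≤ ‖q‖ ^ k.choose 2 * (R / (1 - ‖q‖)) ^ k := by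
  have hR : 0 ≤ R := (norm_nonneg x).trans hx
  have h1q : 0 < 1 - ‖q‖ := sub_pos.2 hq
  rw [norm_div, norm_mul, norm_pow, norm_pow, div_pow, ← mul_div_assoc]
  refine div_le_div₀ (by positivity) (mul_le_mul ?_ ?_ (by positivity) (by positivity))
    (pow_pos h1q k) (one_sub_norm_pow_le_norm_qpC hq k)
  · exact pow_le_pow_of_le_one (norm_nonneg q) hq.le he
  · exact pow_le_pow_left₀ (norm_nonneg x) hx k

lemma summable_norm_pow_choose_two_mul_div_pow (hq : ‖q‖ < 1) (R : ℝ) :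
    Summable fun k ↦ ‖q‖ ^ k.choose 2 * (R / (1 - ‖q‖)) ^ k :=
  summable_pow_choose_two_mul_pow (by rwa [norm_norm]) _

lemma summable_eulerTerm (hq : ‖q‖ < 1) (x : ℂ) : Summable (eulerTerm q x) :=
  .of_norm_bounded (summable_norm_pow_choose_two_mul_div_pow hq ‖x‖)
    fun _ ↦ norm_pow_mul_pow_div_qpC_le hq le_rfl le_rfl

lemma eulerTerm_zero (q x : ℂ) : eulerTerm q x 0 = 1 := by
  simp [eulerTerm, qpC]

lemma eulerTerm_succ (hq : ‖q‖ < 1) (x : ℂ) (k : ℕ) :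
    eulerTerm q x (k + 1) = eulerTerm q (q * x) (k + 1) + x * eulerTerm q (q * x) k := by
  have hk := qpC_ne_zero hq k
  have hk1 := qpC_ne_zero hq (k + 1)
  rw [qpC_succ] at hk1
  have hfac := right_ne_zero_of_mul hk1
  simp only [eulerTerm, qpC_succ, Nat.choose_succ_succ', Nat.choose_one_right]
  field_simp
  ring

lemma tsum_eulerTerm_eq_mul (hq : ‖q‖ < 1) (x : ℂ) :
    ∑' k, eulerTerm q x k = (1 + x) * ∑' k, eulerTerm q (q * x) k := by
  have hs := summable_eulerTerm hq (q * x)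
  calc ∑' k, eulerTerm q x k = 1 + ∑' k, eulerTerm q x (k + 1) := by
        rw [(summable_eulerTerm hq x).tsum_eq_zero_add, eulerTerm_zero]
    _ = 1 + (∑' k, eulerTerm q (q * x) (k + 1) + x * ∑' k, eulerTerm q (q * x) k) := by
        rw [tsum_congr (eulerTerm_succ hq x),
          ((summable_nat_add_iff 1).2 hs).tsum_add (hs.mul_left x), tsum_mul_left]
    _ = (1 + x) * ∑' k, eulerTerm q (q * x) k := by
        rw [hs.tsum_eq_zero_add, eulerTerm_zero]; ring

lemma tsum_eulerTerm_eq_qpC_mul (hq : ‖q‖ < 1) (x : ℂ) (N : ℕ) :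
    ∑' k, eulerTerm q x k = qpC q (-x) N * ∑' k, eulerTerm q (q ^ N * x) k := by
  induction N with
  | zero => simp [qpC]
  | succ N ih =>
    rw [ih, tsum_eulerTerm_eq_mul hq, qpC_succ, pow_succ', mul_assoc q]
    ring

lemma tendsto_tsum_eulerTerm_nhds_zero (hq : ‖q‖ < 1) :
    Tendsto (fun y ↦ ∑' k, eulerTerm q y k) (𝓝 0) (𝓝 1) := by
  have hcont : ContinuousOn (fun y ↦ ∑' k, eulerTerm q y k) (Metric.closedBall 0 1) :=
    continuousOn_tsum (fun k ↦ by unfold eulerTerm; fun_prop)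
      (summable_norm_pow_choose_two_mul_div_pow hq 1)
      fun k y hy ↦ norm_pow_mul_pow_div_qpC_le hq le_rfl (by simpa using hy)
  have h0 : ∑' k, eulerTerm q 0 k = 1 := by
    rw [tsum_eq_single 0 fun k hk ↦ by simp [eulerTerm, hk], eulerTerm_zero]
  simpa [h0] using (hcont.continuousAt (Metric.closedBall_mem_nhds 0 one_pos)).tendsto

theorem hasSum_eulerTerm (hq : ‖q‖ < 1) (x : ℂ) : HasSum (eulerTerm q x) (qpiC q (-x)) := by
  have hprod : Tendsto (qpC q (-x)) atTop (𝓝 (qpiC q (-x))) :=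
    (multipliable_one_sub_mul_pow hq (-x)).hasProd.tendsto_prod_nat
  have htail : Tendsto (fun N ↦ ∑' k, eulerTerm q (q ^ N * x) k) atTop (𝓝 1) := by
    refine (tendsto_tsum_eulerTerm_nhds_zero hq).comp ?_
    simpa using (tendsto_pow_atTop_nhds_zero_of_norm_lt_one hq).mul_const x
  have hlim := hprod.mul htail
  simp only [← tsum_eulerTerm_eq_qpC_mul hq, mul_one] at hlim
  rw [← tendsto_nhds_unique tendsto_const_nhds hlim]
  exact (summable_eulerTerm hq x).hasSum

end Euler

section DoubleSum

variable {q : ℂ}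

lemma two_mul_choose_two_add_self (m : ℕ) : 2 * m.choose 2 + m = m ^ 2 := by
  induction m with
  | zero => rfl
  | succ m ih => rw [Nat.choose_succ_succ', Nat.choose_one_right]; linear_combination ih

lemma summable_eulerTerm_mul_pow_sq_div_qpC (hq : ‖q‖ < 1) (b : ℂ) :
    Summable fun p : ℕ × ℕ ↦
      eulerTerm q (q ^ (p.2 + 1)) p.1 * (q ^ p.2 ^ 2 * b ^ p.2 / qpC q q p.2) := by
  have h1q : 0 ≤ 1 - ‖q‖ := sub_nonneg.2 hq.le
  refine .of_norm_bounded ((summable_norm_pow_choose_two_mul_div_pow hq 1).mul_of_nonneg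
    (summable_norm_pow_choose_two_mul_div_pow hq ‖b‖) (fun _ ↦ by positivity)
    fun _ ↦ by positivity) fun ⟨k, m⟩ ↦ ?_
  rw [norm_mul]
  have hqm : ‖q ^ (m + 1)‖ ≤ 1 := by
    rw [norm_pow]; exact pow_le_one₀ (norm_nonneg q) hq.le
  have hm : m.choose 2 ≤ m ^ 2 := by have := two_mul_choose_two_add_self m; omega
  exact mul_le_mul (norm_pow_mul_pow_div_qpC_le hq le_rfl hqm)
    (norm_pow_mul_pow_div_qpC_le hq hm le_rfl) (norm_nonneg _) (by positivity)

theorem tsum_pow_choose_mul_tsum_div_qpC (hq : ‖q‖ < 1) (b : ℂ) :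
    ∑' k, q ^ (k + 1).choose 2 * (∑' m, q ^ m ^ 2 * (b * q ^ k) ^ m / qpC q q m) / qpC q q k =
      qpiC q (-q) * qpiC (q ^ 2) (-(q * b)) := by
  have hq2 : ‖q ^ 2‖ < 1 := by
    rw [norm_pow]; exact pow_lt_one₀ (norm_nonneg q) hq two_ne_zero
  have hterm (k m : ℕ) :
      q ^ (k + 1).choose 2 * (q ^ m ^ 2 * (b * q ^ k) ^ m / qpC q q m) / qpC q q k =
        eulerTerm q (q ^ (m + 1)) k * (q ^ m ^ 2 * b ^ m / qpC q q m) := by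
    rw [eulerTerm, Nat.choose_succ_succ', Nat.choose_one_right]; ring
  have hinner (m : ℕ) :
      ∑' k, eulerTerm q (q ^ (m + 1)) k * (q ^ m ^ 2 * b ^ m / qpC q q m) =
        qpiC q (-q) * eulerTerm (q ^ 2) (q * b) m := by
    have hne : qpC q (-q) m ≠ 0 :=
      right_ne_zero_of_mul (qpC_mul_qpC_neg q m ▸ qpC_ne_zero hq2 m)
    have hm := qpC_ne_zero hq m
    rw [tsum_mul_right, (hasSum_eulerTerm hq _).tsum_eq, show -q ^ (m + 1) = -q * q ^ m by ring,
      ← qpC_mul_qpiC hq (-q) m, eulerTerm, ← qpC_mul_qpC_neg, ← two_mul_choose_two_add_self m]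
    field_simp
    ring
  calc _ = ∑' k, ∑' m, eulerTerm q (q ^ (m + 1)) k * (q ^ m ^ 2 * b ^ m / qpC q q m) :=
        tsum_congr fun k ↦ by
          rw [← tsum_mul_left, ← tsum_div_const]; exact tsum_congr (hterm k)
    _ = ∑' m, ∑' k, eulerTerm q (q ^ (m + 1)) k * (q ^ m ^ 2 * b ^ m / qpC q q m) :=
        (Summable.tsum_comm
          (f := fun k m ↦ eulerTerm q (q ^ (m + 1)) k * (q ^ m ^ 2 * b ^ m / qpC q q m))
          (summable_eulerTerm_mul_pow_sq_div_qpC hq b)).symm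
    _ = ∑' m, qpiC q (-q) * eulerTerm (q ^ 2) (q * b) m := tsum_congr hinner
    _ = qpiC q (-q) * qpiC (q ^ 2) (-(q * b)) := by
        rw [tsum_mul_left, (hasSum_eulerTerm hq2 _).tsum_eq]

end DoubleSum

theorem Aq_sum_eval (q : ℝ) (hq0 : 0 < q) (hq1 : q < 1) (a : ℂ) (n : ℕ) :
    ∑' k : ℕ, (q : ℂ) ^ (k * (k + 1) / 2) * Aq q (a * (q : ℂ) ^ ((k : ℤ) - 2 * n)) /
        qpC (q : ℂ) (q : ℂ) k =
      qpiC (q : ℂ) (-(q : ℂ)) * qpiC ((q : ℂ) ^ 2) (a * (q : ℂ) ^ (1 - 2 * (n : ℤ))) := by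
  have hq : ‖(q : ℂ)‖ < 1 := by rwa [Complex.norm_real, Real.norm_of_nonneg hq0.le]
  have hq0' : (q : ℂ) ≠ 0 := Complex.ofReal_ne_zero.2 hq0.ne'
  have hzpow (e : ℕ) : (q : ℂ) ^ ((e : ℤ) - 2 * n) = (q : ℂ) ^ e / (q : ℂ) ^ (2 * n) := by
    rw [zpow_sub₀ hq0', zpow_natCast, ← Nat.cast_ofNat, ← Nat.cast_mul, zpow_natCast]
  have hterm (k : ℕ) : -(a * (q : ℂ) ^ ((k : ℤ) - 2 * n)) = -(a / (q : ℂ) ^ (2 * n)) * q ^ k := by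
    rw [hzpow]; ring
  have hprod : -((q : ℂ) * -(a / (q : ℂ) ^ (2 * n))) = a * (q : ℂ) ^ (1 - 2 * (n : ℤ)) := by
    rw [← Nat.cast_one (R := ℤ), hzpow]; ring
  rw [← hprod, ← tsum_pow_choose_mul_tsum_div_qpC hq]
  refine tsum_congr fun k ↦ ?_
  rw [Nat.choose_two_right, Nat.add_sub_cancel, mul_comm (k + 1), Aq, hterm]
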